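/- arXiv:1805.09099 — 2 statements merged into one kernel-verified Lean document; each statement's English description precedes it below -/
import Mathlib

section
/- The Attiyah–Hitchin bracket satisfies the Jacobi identity as a rational-function identity: for pairwise distinct complex numbers p, q, r and arbitrary complex values a, b, c (thought of as χ(p), χ(q), χ(r)), the cyclic sum over (p,a), (q,b), (r,c) of [2(a−b)/(p−q)]·[(a−c)²/(p−r)] − [2(a−b)/(p−q)]·[(b−c)²/(q−r)] vanishes. -/
variable {K : Type*} [Field K]

def ahBracket (p q x y : K) : K := (x - y) ^ 2 / (p - q)

/-- `{{χ(p), χ(q)}, χ(r)}` with `χ(p), χ(q), χ(r) = a, b, c`: the factors `±2(a-b)/(p-q)` are the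
partial derivatives of `(x - y)² / (p - q)` in `x` and `y` at `(a, b)`. -/
def ahNestedBracket (p q r a b c : K) : K :=
  2 * (a - b) / (p - q) * ahBracket p r a c - 2 * (a - b) / (p - q) * ahBracket q r b c

theorem ahNestedBracket_cyclic_sum (p q r a b c : K) (hpq : p ≠ q) (hqr : q ≠ r) (hpr : p ≠ r) :
    ahNestedBracket p q r a b c + ahNestedBracket q r p b c a + ahNestedBracket r p q c a b = 0 := by
  simp only [ahNestedBracket, ahBracket]
  field_simp
  ring

/-- Jacobi identity for the Attiyah–Hitchin bracket
`{χ(p),χ(q)} = (χ(p)-χ(q))²/(p-q)` as a rational-function identity: for pairwise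
distinct `p q r` and arbitrary values `a b c` (standing for `χ(p), χ(q), χ(r)`),
the cyclic sum over `(p,a), (q,b), (r,c)` of
`(2(a-b)/(p-q))·((a-c)²/(p-r)) - (2(a-b)/(p-q))·((b-c)²/(q-r))` vanishes. -/
theorem attiyah_hitchin_jacobi
    (p q r a b c : ℂ) (hpq : p ≠ q) (hqr : q ≠ r) (hpr : p ≠ r) :
    ((2*(a-b)/(p-q)) * ((a-c)^2/(p-r)) - (2*(a-b)/(p-q)) * ((b-c)^2/(q-r)))
    + ((2*(b-c)/(q-r)) * ((b-a)^2/(q-p)) - (2*(b-c)/(q-r)) * ((c-a)^2/(r-p)))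
    + ((2*(c-a)/(r-p)) * ((c-b)^2/(r-q)) - (2*(c-a)/(r-p)) * ((a-b)^2/(p-q)))
    = 0 :=
  ahNestedBracket_cyclic_sum p q r a b c hpq hqr hpr
end

section
/- The trigonometric bracket satisfies the Jacobi identity as a rational-function identity: for pairwise distinct nonzero complex p, q, r and arbitrary complex a, b, c, the cyclic sum of ∂_x F_{p,q}(a,b)·F_{p,r}(a,c) + ∂_y F_{p,q}(a,b)·F_{q,r}(b,c) vanishes, where F_{p,q}(x,y) = (px − qy)(x − y)/(p − q). -/
/-- `F_{p,q}(x,y) = (px - qy)(x - y)/(p - q)`, the trigonometric bracket. -/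
noncomputable def Ftrig (p q x y : ℂ) : ℂ := (p*x - q*y) * (x - y) / (p - q)

/-- `∂ₓ F_{p,q}(x,y)` -/
noncomputable def FtrigX (p q x y : ℂ) : ℂ := (p*(x - y) + (p*x - q*y)) / (p - q)

/-- `∂_y F_{p,q}(x,y)` -/
noncomputable def FtrigY (p q x y : ℂ) : ℂ := (-(q*(x - y)) - (p*x - q*y)) / (p - q)

theorem Ftrig_swap (p q x y : ℂ) : Ftrig q p y x = -Ftrig p q x y := by
  rw [Ftrig, Ftrig, ← neg_sub p q, div_neg]
  ring

theorem FtrigX_swap (p q x y : ℂ) : FtrigX q p y x = -FtrigY p q x y := by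
  rw [FtrigX, FtrigY, ← neg_sub p q, div_neg]
  ring

theorem FtrigY_swap (p q x y : ℂ) : FtrigY q p y x = -FtrigX p q x y := by
  rw [FtrigX, FtrigY, ← neg_sub p q, div_neg]
  ring

theorem trigonometric_jacobi_general
    (p q r a b c : ℂ)
    (hpq : p ≠ q) (hqr : q ≠ r) (hpr : p ≠ r) :
    (FtrigX p q a b * Ftrig p r a c + FtrigY p q a b * Ftrig q r b c)
    + (FtrigX q r b c * Ftrig q p b a + FtrigY q r b c * Ftrig r p c a)
    + (FtrigX r p c a * Ftrig r q c b + FtrigY r p c a * Ftrig p q a b)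
    = 0 := by
  -- After these swaps the only denominators left are `p - q`, `q - r` and `p - r`;
  -- clearing them leaves a polynomial identity.
  rw [Ftrig_swap p q a b, Ftrig_swap p r a c, Ftrig_swap q r b c, FtrigX_swap p r a c,
    FtrigY_swap p r a c]
  have hpq' := sub_ne_zero.mpr hpq
  have hqr' := sub_ne_zero.mpr hqr
  have hpr' := sub_ne_zero.mpr hpr
  simp only [Ftrig, FtrigX, FtrigY]
  field_simp
  ring

/-- Jacobi identity for the trigonometric bracket
`{χ(p),χ(q)}^z = (pχ(p) - qχ(q))(χ(p) - χ(q))/(p - q)` as a rational-function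
identity: for pairwise distinct nonzero `p q r` and arbitrary `a b c`, the cyclic
sum of `∂ₓF_{p,q}(a,b)·F_{p,r}(a,c) + ∂_yF_{p,q}(a,b)·F_{q,r}(b,c)` vanishes. -/
theorem trigonometric_jacobi
    (p q r a b c : ℂ) (hp : p ≠ 0) (hq : q ≠ 0) (hr : r ≠ 0)
    (hpq : p ≠ q) (hqr : q ≠ r) (hpr : p ≠ r) :
    (FtrigX p q a b * Ftrig p r a c + FtrigY p q a b * Ftrig q r b c)
    + (FtrigX q r b c * Ftrig q p b a + FtrigY q r b c * Ftrig r p c a)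
    + (FtrigX r p c a * Ftrig r q c b + FtrigY r p c a * Ftrig p q a b)
    = 0 :=
  trigonometric_jacobi_general p q r a b c hpq hqr hpr
end
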